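/- Let γ > 1, c₀ > 0, and let n : [0,1] → ℝ be a positive smooth function with n'(1) = 0 and n(1) = 1. Set b₁ = √(2c₀/(γ+1)). Suppose φ : [0,1] × ℝ → ℝ is a C² function satisfying the potential flow equation n(x)²(c² − (∂₁φ)²)∂₁₁φ − 2∂₁φ ∂₂φ ∂₁₂φ + (c² − (∂₂φ)²/n(x)²)∂₂₂φ + n(x)n'(x)(c² + (∂₂φ)²/n(x)²)∂₁φ = 0 up to the boundary x = 1, where c² = c₀ − ((γ−1)/2)((∂₁φ)² + (∂₂φ)²/n(x)²), and the sonic exit condition (∂₁φ)² + (∂₂φ)² = b₁² on {x = 1}. Then at every point of {x = 1} one has (c² + (∂₂φ)²)·(∂₁₁φ + ∂₂₂φ) = c²·∂₁₁φ. Consequently, if additionally ∂₁₁φ > 0 on {x = 1}, then ∂₁₁φ + ∂₂₂φ > 0 and hence ((γ+1)/2)∂₁₁φ + ((γ−1)/2)∂₂₂φ > 0 at every point of {x = 1}. -/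

import Mathlib

open Set

/-- The coordinate domain of the approximate nozzle: `[0,1] × ℝ` (periodic in `y`). -/
def nozzle : Set (ℝ × ℝ) := Set.Icc (0:ℝ) 1 ×ˢ (Set.univ : Set ℝ)

/-- `∂₁φ`, computed within the nozzle. -/
noncomputable def pd1 (φ : ℝ × ℝ → ℝ) (p : ℝ × ℝ) : ℝ :=
  fderivWithin ℝ φ nozzle p (1, 0)

/-- `∂₂φ`, computed within the nozzle. -/
noncomputable def pd2 (φ : ℝ × ℝ → ℝ) (p : ℝ × ℝ) : ℝ :=
  fderivWithin ℝ φ nozzle p (0, 1)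

/-- `∂₁₁φ`. -/
noncomputable def pd11 (φ : ℝ × ℝ → ℝ) (p : ℝ × ℝ) : ℝ :=
  fderivWithin ℝ (pd1 φ) nozzle p (1, 0)

/-- `∂₁₂φ`. -/
noncomputable def pd12 (φ : ℝ × ℝ → ℝ) (p : ℝ × ℝ) : ℝ :=
  fderivWithin ℝ (pd2 φ) nozzle p (1, 0)

/-- `∂₂₂φ`. -/
noncomputable def pd22 (φ : ℝ × ℝ → ℝ) (p : ℝ × ℝ) : ℝ :=
  fderivWithin ℝ (pd2 φ) nozzle p (0, 1)

/-- The squared sound speed `c² = c₀ − ((γ−1)/2)((∂₁φ)² + (∂₂φ)²/n(x)²)` from Bernoulli's law. -/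
noncomputable def soundSq (γ c₀ : ℝ) (n : ℝ → ℝ) (φ : ℝ × ℝ → ℝ) (p : ℝ × ℝ) : ℝ :=
  c₀ - (γ - 1) / 2 * ((pd1 φ p) ^ 2 + (pd2 φ p) ^ 2 / (n p.1) ^ 2)

/-- The potential flow equation at the point `p`. -/
def PotentialFlowEq (γ c₀ : ℝ) (n : ℝ → ℝ) (φ : ℝ × ℝ → ℝ) (p : ℝ × ℝ) : Prop :=
  (n p.1) ^ 2 * (soundSq γ c₀ n φ p - (pd1 φ p) ^ 2) * pd11 φ p
    - 2 * pd1 φ p * pd2 φ p * pd12 φ p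
    + (soundSq γ c₀ n φ p - (pd2 φ p) ^ 2 / (n p.1) ^ 2) * pd22 φ p
    + n p.1 * deriv n p.1 * (soundSq γ c₀ n φ p + (pd2 φ p) ^ 2 / (n p.1) ^ 2) * pd1 φ p = 0

lemma nozzle_uniqueDiffOn : UniqueDiffOn ℝ nozzle :=
  (uniqueDiffOn_Icc zero_lt_one).prod uniqueDiffOn_univ

lemma mem_nozzle (y : ℝ) : ((1:ℝ), y) ∈ nozzle :=
  ⟨⟨zero_le_one, le_refl 1⟩, trivial⟩

lemma nozzle_closure_interior (y : ℝ) : ((1:ℝ), y) ∈ closure (interior nozzle) := by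
  rw [nozzle, interior_prod_eq, interior_Icc, interior_univ, closure_prod_eq,
    closure_Ioo (by norm_num : (0:ℝ) ≠ 1), closure_univ]
  exact ⟨⟨zero_le_one, le_refl 1⟩, trivial⟩

section
variable (φ : ℝ × ℝ → ℝ)

-- the second fderivWithin is differentiable... we need DifferentiableOn of fderivWithin
lemma fder_contDiffOn (hφ : ContDiffOn ℝ 2 φ nozzle) : ContDiffOn ℝ 1 (fderivWithin ℝ φ nozzle) nozzle := by
  have := hφ.fderivWithin nozzle_uniqueDiffOn (m := 1) ?_
  · exact this
  · norm_num

-- pd V as clm apply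
lemma pdV_eq (hφ : ContDiffOn ℝ 2 φ nozzle) (V : ℝ × ℝ) (p : ℝ × ℝ) (hp : p ∈ nozzle) :
    fderivWithin ℝ (fun q => fderivWithin ℝ φ nozzle q V) nozzle p =
      (fderivWithin ℝ (fderivWithin ℝ φ nozzle) nozzle p).flip V := by
  have hd : DifferentiableWithinAt ℝ (fderivWithin ℝ φ nozzle) nozzle p :=
    (fder_contDiffOn φ hφ p hp).differentiableWithinAt one_ne_zero
  rw [fderivWithin_clm_apply (nozzle_uniqueDiffOn p hp) hd
    (differentiableWithinAt_const V)]
  have : fderivWithin ℝ (fun _ : ℝ × ℝ => V) nozzle p = 0 :=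
    fderivWithin_const_apply V
  rw [this]
  simp

lemma symm_second (hφ : ContDiffOn ℝ 2 φ nozzle) (p : ℝ × ℝ) (hy : p ∈ closure (interior nozzle)) (hp : p ∈ nozzle)
    (V W : ℝ × ℝ) :
    fderivWithin ℝ (fun q => fderivWithin ℝ φ nozzle q V) nozzle p W =
      fderivWithin ℝ (fun q => fderivWithin ℝ φ nozzle q W) nozzle p V := by
  rw [pdV_eq φ hφ V p hp, pdV_eq φ hφ W p hp]
  exact (hφ.contDiffWithinAt hp).isSymmSndFDerivWithinAt (by simp) nozzle_uniqueDiffOn hy hp W V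

-- derivative along the exit line
lemma hasDerivAt_pd (hφ : ContDiffOn ℝ 2 φ nozzle) (V : ℝ × ℝ) (y : ℝ) :
    HasDerivAt (fun t => fderivWithin ℝ φ nozzle (1, t) V)
      (fderivWithin ℝ (fun q => fderivWithin ℝ φ nozzle q V) nozzle (1, y) (0, 1)) y := by
  have hcurve : HasDerivAt (fun t : ℝ => ((1:ℝ), t)) ((0:ℝ), (1:ℝ)) y :=
    (hasDerivAt_const y (1:ℝ)).prodMk (hasDerivAt_id y)
  have hd : DifferentiableWithinAt ℝ (fun q => fderivWithin ℝ φ nozzle q V) nozzle (1, y) := by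
    have : DifferentiableWithinAt ℝ (fderivWithin ℝ φ nozzle) nozzle (1, y) :=
      (fder_contDiffOn φ hφ _ (mem_nozzle y)).differentiableWithinAt one_ne_zero
    exact this.clm_apply (differentiableWithinAt_const V)
  have := hd.hasFDerivWithinAt.comp_hasDerivWithinAt (s := (univ : Set ℝ)) y
    (hcurve.hasDerivWithinAt) (fun t _ => mem_nozzle t)
  rw [hasDerivWithinAt_univ] at this
  exact this
end

/-- At the sonic exit `{x = 1}` of the nozzle, the potential flow equation
combined with the `y`-derivative of the sonic exit condition yields the identity
`(c² + (∂₂φ)²)(∂₁₁φ + ∂₂₂φ) = c² ∂₁₁φ`; consequently, if the flow accelerates at the exit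
(`∂₁₁φ > 0`), then `Δφ > 0` and `((γ+1)/2)∂₁₁φ + ((γ−1)/2)∂₂₂φ > 0` there. -/
theorem sonic_exit_identity
    (γ c₀ : ℝ) (hγ : 1 < γ) (hc₀ : 0 < c₀)
    (n : ℝ → ℝ) (hn : ContDiff ℝ (⊤ : ℕ∞) n)
    (hnpos : ∀ t ∈ Icc (0:ℝ) 1, 0 < n t)
    (hn'1 : deriv n 1 = 0) (hn1 : n 1 = 1)
    (b₁ : ℝ) (hb₁ : b₁ = Real.sqrt (2 * c₀ / (γ + 1)))
    (φ : ℝ × ℝ → ℝ) (hφ : ContDiffOn ℝ 2 φ nozzle)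
    -- the potential flow equation holds up to the boundary x = 1
    (hpde : ∀ p ∈ nozzle, PotentialFlowEq γ c₀ n φ p)
    -- the sonic exit condition
    (hexit : ∀ y : ℝ, (pd1 φ (1, y)) ^ 2 + (pd2 φ (1, y)) ^ 2 = b₁ ^ 2) :
    (∀ y : ℝ,
      (soundSq γ c₀ n φ (1, y) + (pd2 φ (1, y)) ^ 2) * (pd11 φ (1, y) + pd22 φ (1, y))
        = soundSq γ c₀ n φ (1, y) * pd11 φ (1, y)) ∧
    ((∀ y : ℝ, 0 < pd11 φ (1, y)) →
      ∀ y : ℝ, 0 < pd11 φ (1, y) + pd22 φ (1, y) ∧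
        0 < (γ + 1) / 2 * pd11 φ (1, y) + (γ - 1) / 2 * pd22 φ (1, y)) := by
  have hγ1 : (0:ℝ) < γ + 1 := by linarith
  have hb₁sq : b₁ ^ 2 = 2 * c₀ / (γ + 1) := by
    rw [hb₁, sq, Real.mul_self_sqrt (by positivity)]
  have hb₁pos : 0 < b₁ ^ 2 := by rw [hb₁sq]; positivity
  -- the squared sound speed at the exit
  have hc2 : ∀ y : ℝ, soundSq γ c₀ n φ (1, y) = (pd1 φ (1, y)) ^ 2 + (pd2 φ (1, y)) ^ 2 := by
    intro y
    have h := hexit y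
    rw [soundSq]
    show c₀ - (γ - 1) / 2 * ((pd1 φ (1,y)) ^ 2 + (pd2 φ (1,y)) ^ 2 / (n 1) ^ 2) = _
    rw [hn1, h]
    rw [hb₁sq] at h
    rw [show (pd1 φ (1,y))^2 + (pd2 φ (1,y))^2 / (1:ℝ)^2
        = (pd1 φ (1,y))^2 + (pd2 φ (1,y))^2 by ring, h, hb₁sq]
    field_simp
    ring
  -- the y-derivative of the sonic condition
  have hrel : ∀ y : ℝ, pd1 φ (1, y) * pd12 φ (1, y) + pd2 φ (1, y) * pd22 φ (1, y) = 0 := by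
    intro y
    have h1 := hasDerivAt_pd φ hφ (1, 0) y
    have h2 := hasDerivAt_pd φ hφ (0, 1) y
    have hg : HasDerivAt (fun t => (fderivWithin ℝ φ nozzle (1, t)) (1,0) ^ 2
        + (fderivWithin ℝ φ nozzle (1, t)) (0,1) ^ 2)
        (2 * fderivWithin ℝ φ nozzle (1, y) (1,0) ^ 1 *
            fderivWithin ℝ (fun q => fderivWithin ℝ φ nozzle q (1,0)) nozzle (1, y) (0, 1)
          + 2 * fderivWithin ℝ φ nozzle (1, y) (0,1) ^ 1 *
            fderivWithin ℝ (fun q => fderivWithin ℝ φ nozzle q (0,1)) nozzle (1, y) (0, 1)) y :=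
      (h1.pow 2).add (h2.pow 2)
    have hg0 : HasDerivAt (fun t => (fderivWithin ℝ φ nozzle (1, t)) (1,0) ^ 2
        + (fderivWithin ℝ φ nozzle (1, t)) (0,1) ^ 2) 0 y := by
      have : (fun t => (fderivWithin ℝ φ nozzle (1, t)) (1,0) ^ 2
          + (fderivWithin ℝ φ nozzle (1, t)) (0,1) ^ 2) = fun _ => b₁ ^ 2 := by
        funext t; exact hexit t
      rw [this]; exact hasDerivAt_const y _
    have huniq := hg.unique hg0
    have hsym := symm_second φ hφ (1, y) (nozzle_closure_interior y) (mem_nozzle y) (1,0) (0,1)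
    have h12 : fderivWithin ℝ (fun q => fderivWithin ℝ φ nozzle q (1,0)) nozzle (1, y) (0, 1)
        = pd12 φ (1, y) := by rw [hsym]; rfl
    rw [h12] at huniq
    have h22 : fderivWithin ℝ (fun q => fderivWithin ℝ φ nozzle q (0,1)) nozzle (1, y) (0, 1)
        = pd22 φ (1, y) := rfl
    rw [h22] at huniq
    have hu : fderivWithin ℝ φ nozzle (1,y) (1,0) = pd1 φ (1,y) := rfl
    have hv : fderivWithin ℝ φ nozzle (1,y) (0,1) = pd2 φ (1,y) := rfl
    rw [hu, hv] at huniq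
    nlinarith [huniq]
  -- the PDE at the exit
  have hpde' : ∀ y : ℝ,
      ((pd2 φ (1,y))^2) * pd11 φ (1,y) - 2 * pd1 φ (1,y) * pd2 φ (1,y) * pd12 φ (1,y)
        + ((pd1 φ (1,y))^2) * pd22 φ (1,y) = 0 := by
    intro y
    have h := hpde (1, y) (mem_nozzle y)
    rw [PotentialFlowEq] at h
    have hn1' : n ((1:ℝ),y).1 = 1 := hn1
    have hn'1' : deriv n ((1:ℝ),y).1 = 0 := hn'1
    rw [hn1', hn'1', hc2 y] at h
    set u := pd1 φ (1,y); set v := pd2 φ (1,y)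
    have : (u^2 + v^2 - u^2) * pd11 φ (1,y) - 2*u*v*pd12 φ (1,y)
        + (u^2 + v^2 - v^2) * pd22 φ (1,y) = 0 := by
      nlinarith [h]
    nlinarith [this]
  have hmain : ∀ y : ℝ,
      (soundSq γ c₀ n φ (1, y) + (pd2 φ (1, y)) ^ 2) * (pd11 φ (1, y) + pd22 φ (1, y))
        = soundSq γ c₀ n φ (1, y) * pd11 φ (1, y) := by
    intro y
    rw [hc2 y]
    have h1 := hpde' y
    have h2 := hrel y
    linear_combination h1 + 2 * pd2 φ (1,y) * h2
  refine ⟨hmain, fun h11 y => ?_⟩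
  have hb := hexit y
  have hcpos : 0 < soundSq γ c₀ n φ (1, y) := by rw [hc2 y, hb]; exact hb₁pos
  have hc2v : 0 < soundSq γ c₀ n φ (1, y) + (pd2 φ (1, y)) ^ 2 := by positivity
  have hsum : 0 < pd11 φ (1, y) + pd22 φ (1, y) := by
    have := hmain y
    nlinarith [h11 y, mul_pos hcpos (h11 y)]
  exact ⟨hsum, by nlinarith [h11 y, hsum]⟩
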